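/- Under the hypotheses of Lemma 1 and assuming additionally that with probability at least 1 − (δ + γ), {Φ_j(f_u, P_XY) : u ∈ U} ⊆ [inf_{f∈R̂} Φ_j(f, D) − α, sup_{f∈R̂} Φ_j(f, D) + α], it follows that with probability at least 1 − (δ + γ), Φ_j(g*, P_U) ∈ [inf_{f∈R̂} Φ_j(f, D) − τ_j − α, sup_{f∈R̂} Φ_j(f, D) + τ_j + α]. -/

import Mathlib

/-!
Each submodel VI is a mixture `p Φcond + (1 - p) Φcomp` whose two components differ by at most `τ`,
so it lies within `(1 - p) τ ≤ τ` of `Φcond`. On the coverage event every `Φcond u` therefore lies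
in the `τ`-widened interval, and so does the convex combination `Φ(g*) = ∑ p u Φcond u`; the
widened event contains the coverage event and has at least its probability.
-/

open MeasureTheory Set

lemma abs_sub_mix_le {p c d τ : ℝ} (hp0 : 0 ≤ p) (hp1 : p ≤ 1) (hcd : |c - d| ≤ τ) :
    |c - (p * c + (1 - p) * d)| ≤ τ :=
  calc |c - (p * c + (1 - p) * d)| = |1 - p| * |c - d| := by rw [← abs_mul]; ring_nf
    _ ≤ 1 * τ := by
        gcongr
        rw [abs_le]
        constructor <;> linarith
    _ = τ := one_mul τ

lemma mem_Icc_sub_add_of_abs_sub_le {x y a b τ : ℝ} (hx : x ∈ Icc a b) (hxy : |y - x| ≤ τ) :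
    y ∈ Icc (a - τ) (b + τ) := by
  rw [abs_le] at hxy
  exact ⟨by linarith [hx.1], by linarith [hx.2]⟩

lemma sum_mul_mem_Icc {U : Type*} [Fintype U] {p x : U → ℝ} {a b : ℝ} (hp0 : ∀ u, 0 ≤ p u)
    (hsum : ∑ u, p u = 1) (hx : ∀ u, x u ∈ Icc a b) : ∑ u, p u * x u ∈ Icc a b :=
  (convex_Icc a b).sum_mem (fun u _ => hp0 u) hsum fun u _ => hx u

/-- Lemma 1 of the paper, in deterministic form. -/
theorem sum_mul_mem_Icc_of_mix_mem_Icc {U : Type*} [Fintype U] {p Φcond Φcomp : U → ℝ}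
    {τ a b : ℝ} (hp0 : ∀ u, 0 ≤ p u) (hp1 : ∀ u, p u ≤ 1) (hsum : ∑ u, p u = 1)
    (hdrift : ∀ u, |Φcond u - Φcomp u| ≤ τ)
    (hmix : ∀ u, p u * Φcond u + (1 - p u) * Φcomp u ∈ Icc a b) :
    ∑ u, p u * Φcond u ∈ Icc (a - τ) (b + τ) :=
  sum_mul_mem_Icc hp0 hsum fun u =>
    mem_Icc_sub_add_of_abs_sub_le (hmix u) (abs_sub_mix_le (hp0 u) (hp1 u) (hdrift u))

theorem stmt11_general {Ω U M : Type*} [MeasurableSpace Ω] [Fintype U]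
    (μ : Measure Ω) [IsProbabilityMeasure μ]
    (p : U → ℝ) (hp0 : ∀ u, 0 ≤ p u) (hp1 : ∀ u, p u ≤ 1) (hsum : ∑ u, p u = 1)
    (ΦgStar : ℝ) (Φcond Φcomp Φmarg : U → ℝ) (τ : ℝ)
    (htarget : ΦgStar = ∑ u, p u * Φcond u)
    (hmix : ∀ u, Φmarg u = p u * Φcond u + (1 - p u) * Φcomp u)
    (hdrift : ∀ u, |Φcond u - Φcomp u| ≤ τ)
    (Rhat : Ω → Finset M) (hne : ∀ ω, (Rhat ω).Nonempty)
    (Φemp : M → Ω → ℝ) (α : ℝ)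
    (δ γ : ℝ)
    (hcover : (μ {ω | ∀ u, Φmarg u ∈
        Set.Icc ((Rhat ω).inf' (hne ω) (fun f => Φemp f ω) - α)
                ((Rhat ω).sup' (hne ω) (fun f => Φemp f ω) + α)}).toReal ≥ 1 - (δ + γ)) :
    (μ {ω | ΦgStar ∈
        Set.Icc ((Rhat ω).inf' (hne ω) (fun f => Φemp f ω) - τ - α)
                ((Rhat ω).sup' (hne ω) (fun f => Φemp f ω) + τ + α)}).toReal ≥
      1 - (δ + γ) := by
  refine le_trans hcover (ENNReal.toReal_mono (measure_ne_top μ _) (measure_mono ?_))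
  intro ω hω
  have hwiden := sum_mul_mem_Icc_of_mix_mem_Icc hp0 hp1 hsum hdrift fun u => hmix u ▸ hω u
  rwa [sub_right_comm, add_right_comm, ← htarget] at hwiden

/-- Theorem 4: under the hypotheses of Lemma 1, if with probability at
least `1 - (δ + γ)` every submodel marginal VI `Φmarg u` lies in
`[inf_{f ∈ R̂} Φemp f - α, sup_{f ∈ R̂} Φemp f + α]`, then with probability at least
`1 - (δ + γ)` the true-model VI `ΦgStar` lies in the `τ`-widened interval
`[inf_{f ∈ R̂} Φemp f - τ - α, sup_{f ∈ R̂} Φemp f + τ + α]`. -/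
theorem stmt11 {Ω U M : Type*} [MeasurableSpace Ω] [Fintype U] [Nonempty U]
    (μ : Measure Ω) [IsProbabilityMeasure μ]
    (p : U → ℝ) (hp0 : ∀ u, 0 ≤ p u) (hp1 : ∀ u, p u ≤ 1) (hsum : ∑ u, p u = 1)
    (ΦgStar : ℝ) (Φcond Φcomp Φmarg : U → ℝ) (τ : ℝ) (hτ : 0 ≤ τ)
    (htarget : ΦgStar = ∑ u, p u * Φcond u)
    (hmix : ∀ u, Φmarg u = p u * Φcond u + (1 - p u) * Φcomp u)
    (hdrift : ∀ u, |Φcond u - Φcomp u| ≤ τ)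
    (Rhat : Ω → Finset M) (hne : ∀ ω, (Rhat ω).Nonempty)
    (Φemp : M → Ω → ℝ) (α : ℝ) (hα : 0 ≤ α)
    (δ γ : ℝ) (hδ : 0 ≤ δ) (hγ : 0 ≤ γ)
    (hcover : (μ {ω | ∀ u, Φmarg u ∈
        Set.Icc ((Rhat ω).inf' (hne ω) (fun f => Φemp f ω) - α)
                ((Rhat ω).sup' (hne ω) (fun f => Φemp f ω) + α)}).toReal ≥ 1 - (δ + γ)) :
    (μ {ω | ΦgStar ∈
        Set.Icc ((Rhat ω).inf' (hne ω) (fun f => Φemp f ω) - τ - α)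
                ((Rhat ω).sup' (hne ω) (fun f => Φemp f ω) + τ + α)}).toReal ≥
      1 - (δ + γ) :=
  stmt11_general μ p hp0 hp1 hsum ΦgStar Φcond Φcomp Φmarg τ htarget hmix hdrift Rhat hne Φemp α δ γ
    hcover
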